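/- arXiv:2110.14148 — 2 statements merged into one kernel-verified Lean document; each statement's English description precedes it below -/
import Mathlib

section
/- Let C ⊆ ℝ^p be a convex set, θ ∈ ℝ^p, and suppose z ∈ C is a Bregman projection of θ onto C, i.e. d_φ(z, θ) ≤ d_φ(x, θ) for all x ∈ C. Then for every x ∈ C one has d_φ(x, θ) ≥ d_φ(x, z) + d_φ(z, θ). -/
open MeasureTheory ProbabilityTheory Real

/-- Bregman divergence generated by a differentiable function `φ`. -/
noncomputable def dphi {p : ℕ} (φ : EuclideanSpace ℝ (Fin p) → ℝ)
    (x y : EuclideanSpace ℝ (Fin p)) : ℝ :=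
  φ x - φ y - inner ℝ (gradient φ y) (x - y)

/-!
The three-point identity `d(x, θ) = d(x, z) + d(z, θ) + ⟪∇φ z - ∇φ θ, x - z⟫` holds for any `φ`,
and `∇φ z - ∇φ θ` is the gradient at `z` of `y ↦ d(y, θ)`. Since `z` minimizes this function
over the convex set `C`, the first-order optimality condition makes the inner product nonnegative.
-/

theorem IsLocalMinOn.inner_sub_nonneg_of_hasGradientAt
    {F : Type*} [NormedAddCommGroup F] [InnerProductSpace ℝ F] [CompleteSpace F]
    {f : F → ℝ} {s : Set F} {a g x : F} (hmin : IsLocalMinOn f s a)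
    (hf : HasGradientAt f g a) (hs : Convex ℝ s) (ha : a ∈ s) (hx : x ∈ s) :
    0 ≤ inner ℝ g (x - a) := by
  have hcone : x - a ∈ posTangentConeAt s a :=
    sub_mem_posTangentConeAt_of_segment_subset (hs.segment_subset ha hx)
  simpa using hmin.hasFDerivWithinAt_nonneg hf.hasFDerivAt.hasFDerivWithinAt hcone

section Bregman

variable {p : ℕ} (φ : EuclideanSpace ℝ (Fin p) → ℝ)

theorem dphi_add_dphi (x z θ : EuclideanSpace ℝ (Fin p)) :
    dphi φ x z + dphi φ z θ = dphi φ x θ - inner ℝ (gradient φ z - gradient φ θ) (x - z) := by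
  have hsplit : x - θ = (x - z) + (z - θ) := by abel
  simp only [dphi, hsplit, inner_add_right, inner_sub_left]
  ring

variable {φ}

theorem hasGradientAt_dphi_left {z : EuclideanSpace ℝ (Fin p)} (hφ : DifferentiableAt ℝ φ z)
    (θ : EuclideanSpace ℝ (Fin p)) :
    HasGradientAt (fun y ↦ dphi φ y θ) (gradient φ z - gradient φ θ) z := by
  set ℓ := InnerProductSpace.toDual ℝ _ (gradient φ θ)
  have hdphi : (fun y ↦ dphi φ y θ) = fun y ↦ (φ y - φ θ) - (ℓ y - ℓ θ) := by
    funext y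
    simp only [dphi, ℓ, InnerProductSpace.toDual_apply_apply, inner_sub_right]
  rw [hasGradientAt_iff_hasFDerivAt, map_sub, toDual_gradient, hdphi]
  exact (hφ.hasFDerivAt.sub_const _).fun_sub (ℓ.hasFDerivAt.sub_const _)

end Bregman

theorem bregman_obtuse_angle_general
    {p : ℕ}
    (φ : EuclideanSpace ℝ (Fin p) → ℝ)
    (hφdiff : Differentiable ℝ φ)
    (C : Set (EuclideanSpace ℝ (Fin p))) (hC : Convex ℝ C)
    (θ z : EuclideanSpace ℝ (Fin p)) (hzC : z ∈ C)
    (hproj : ∀ x ∈ C, dphi φ z θ ≤ dphi φ x θ) :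
    ∀ x ∈ C, dphi φ x z + dphi φ z θ ≤ dphi φ x θ := by
  intro x hx
  have hmin : IsLocalMinOn (fun y ↦ dphi φ y θ) C z := IsMinOn.localize hproj
  have hfirst := hmin.inner_sub_nonneg_of_hasGradientAt
    (hasGradientAt_dphi_left (hφdiff z) θ) hC hzC hx
  rw [dphi_add_dphi]
  linarith

/-- **Obtuse angle property of Bregman projections.** If `z ∈ C` is a Bregman
projection of `θ` onto the convex set `C` (a minimizer over `C` of
`x ↦ d_φ(x, θ)`), then `d_φ(x, θ) ≥ d_φ(x, z) + d_φ(z, θ)` for all `x ∈ C`. -/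
theorem bregman_obtuse_angle
    {p : ℕ} (hp : 0 < p)
    (φ : EuclideanSpace ℝ (Fin p) → ℝ)
    (hφconv : ConvexOn ℝ Set.univ φ) (hφdiff : Differentiable ℝ φ)
    (C : Set (EuclideanSpace ℝ (Fin p))) (hC : Convex ℝ C)
    (θ z : EuclideanSpace ℝ (Fin p)) (hzC : z ∈ C)
    (hproj : ∀ x ∈ C, dphi φ z θ ≤ dphi φ x θ) :
    ∀ x ∈ C, dphi φ x z + dphi φ z θ ≤ dphi φ x θ :=
  bregman_obtuse_angle_general φ hφdiff C hC θ z hzC hproj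
end

section
/- Let Q be a Borel probability measure on ℝ^p with Q([−M,M]^p) = 1. Then for every Θ = (θ₁,…,θ_k) ∈ (ℝ^p)^k there exists Θ′ = (θ′₁,…,θ′_k) ∈ ([−M,M]^p)^k such that ∫ f_{Θ′} dQ ≤ ∫ f_Θ dQ (both integrals being finite); in fact one may take each θ′_j to be a Bregman projection of θ_j onto [−M,M]^p, i.e. a minimizer over [−M,M]^p of x ↦ d_φ(x, θ_j). -/
open MeasureTheory ProbabilityTheory Real Filter
open scoped ENNReal

/-- The cube `[-M, M]^p` in `ℝ^p`. -/
def cube (p : ℕ) (M : ℝ) : Set (EuclideanSpace ℝ (Fin p)) := {x | ∀ i, |x i| ≤ M}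

/-- The clustering objective `f_Θ(x) = Ψ(d_φ(x,θ₁),…,d_φ(x,θ_k))`. -/
noncomputable def fTheta {p k : ℕ} (φ : EuclideanSpace ℝ (Fin p) → ℝ)
    (Ψ : (Fin k → ℝ) → ℝ) (Θ : Fin k → EuclideanSpace ℝ (Fin p))
    (x : EuclideanSpace ℝ (Fin p)) : ℝ :=
  Ψ (fun j => dphi φ x (Θ j))

open Set

theorem ConvexOn.add_fderiv_sub_le {E : Type*} [NormedAddCommGroup E] [NormedSpace ℝ E]
    {s : Set E} {f : E → ℝ} (hf : ConvexOn ℝ s f) {x y : E} (hx : x ∈ s) (hy : y ∈ s)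
    (hd : DifferentiableAt ℝ f y) : f y + fderiv ℝ f y (x - y) ≤ f x := by
  have hline : ConvexOn ℝ (AffineMap.lineMap y x ⁻¹' s) (f ∘ AffineMap.lineMap y x) :=
    hf.comp_affineMap _
  have hderiv : HasDerivAt (f ∘ AffineMap.lineMap y x) (fderiv ℝ f y (x - y)) (0 : ℝ) := by
    have hf' : HasFDerivAt f (fderiv ℝ f y) (AffineMap.lineMap y x (0 : ℝ)) := by
      simpa using hd.hasFDerivAt
    exact hf'.comp_hasDerivAt 0 AffineMap.hasDerivAt_lineMap
  have hslope :=
    hline.le_slope_of_hasDerivAt (by simpa using hy) (by simpa using hx) zero_lt_one hderiv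
  rw [slope_def_field] at hslope
  simp only [Function.comp_apply, AffineMap.lineMap_apply_zero,
    AffineMap.lineMap_apply_one] at hslope
  linarith

theorem LipschitzOnWith.of_abs_sub_le_mul_sum_abs {ι : Type*} [Fintype ι] {s : Set (ι → ℝ)}
    {g : (ι → ℝ) → ℝ} {τ : ℝ} (hτ : 0 ≤ τ)
    (hg : ∀ u ∈ s, ∀ v ∈ s, |g u - g v| ≤ τ * ∑ j, |u j - v j|) :
    LipschitzOnWith (τ * Fintype.card ι).toNNReal g s := by
  refine LipschitzOnWith.of_dist_le_mul fun u hu v hv => ?_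
  calc dist (g u) (g v) ≤ τ * ∑ j, |u j - v j| := hg u hu v hv
    _ ≤ τ * ∑ _j : ι, dist u v := by
        gcongr with j
        exact dist_le_pi_dist u v j
    _ ≤ (τ * Fintype.card ι).toNNReal * dist u v := by
        rw [Finset.sum_const, Finset.card_univ, nsmul_eq_mul, ← mul_assoc]
        gcongr
        exact Real.le_coe_toNNReal _

theorem MeasureTheory.Integrable.of_continuousOn_of_ae_mem {X E : Type*} [TopologicalSpace X]
    [T2Space X] [MeasurableSpace X] [OpensMeasurableSpace X] [NormedAddCommGroup E]
    {μ : Measure X} [IsFiniteMeasureOnCompacts μ] {K : Set X} {f : X → E} (hK : IsCompact K)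
    (hf : ContinuousOn f K) (hμ : ∀ᵐ x ∂μ, x ∈ K) : Integrable f μ := by
  rw [← Measure.restrict_eq_self_of_ae_mem hμ]
  exact hf.integrableOn_compact hK

theorem cube_eq_preimage_pi (p : ℕ) (M : ℝ) :
    cube p M = EuclideanSpace.equiv (Fin p) ℝ ⁻¹' univ.pi fun _ => Icc (-M) M := by
  ext x
  simp [cube, abs_le, Pi.le_def, forall_and]

theorem isCompact_cube (p : ℕ) (M : ℝ) : IsCompact (cube p M) := by
  rw [cube_eq_preimage_pi]
  exact (EuclideanSpace.equiv (Fin p) ℝ).toHomeomorph.isCompact_preimage.2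
    (isCompact_univ_pi fun _ => isCompact_Icc)

theorem convex_cube (p : ℕ) (M : ℝ) : Convex ℝ (cube p M) := by
  rw [cube_eq_preimage_pi]
  exact (convex_pi fun _ _ => convex_Icc _ _).linear_preimage
    (EuclideanSpace.equiv (Fin p) ℝ).toLinearMap

section Bregman

variable {p : ℕ} {φ : EuclideanSpace ℝ (Fin p) → ℝ}

theorem continuous_dphi_left (hφ : Continuous φ) (θ : EuclideanSpace ℝ (Fin p)) :
    Continuous fun x => dphi φ x θ := by
  unfold dphi
  fun_prop

theorem dphi_nonneg (hφ : ConvexOn ℝ univ φ) {y : EuclideanSpace ℝ (Fin p)}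
    (hy : DifferentiableAt ℝ φ y) (x : EuclideanSpace ℝ (Fin p)) : 0 ≤ dphi φ x y := by
  have htangent := hφ.add_fderiv_sub_le (mem_univ x) (mem_univ y) hy
  rw [dphi, inner_gradient_left]
  linarith

theorem dphi_add_dphi_add_inner (x a θ : EuclideanSpace ℝ (Fin p)) :
    dphi φ x a + dphi φ a θ + inner ℝ (gradient φ a - gradient φ θ) (x - a) = dphi φ x θ := by
  have hsplit : x - θ = (x - a) + (a - θ) := by abel
  simp only [dphi, hsplit, inner_add_right, inner_sub_left]
  ring

theorem hasFDerivAt_dphi_left {a : EuclideanSpace ℝ (Fin p)} (ha : DifferentiableAt ℝ φ a)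
    (θ : EuclideanSpace ℝ (Fin p)) :
    HasFDerivAt (fun x => dphi φ x θ) (innerSL ℝ (gradient φ a - gradient φ θ)) a := by
  have hfun : (fun x => dphi φ x θ) =
      fun x => φ x - φ θ - (innerSL ℝ (gradient φ θ) x - inner ℝ (gradient φ θ) θ) := by
    ext x
    simp [dphi, inner_sub_right]
  have hderiv : innerSL ℝ (gradient φ a - gradient φ θ) =
      fderiv ℝ φ a - innerSL ℝ (gradient φ θ) := by
    ext v
    simp [inner_gradient_left]
  rw [hfun, hderiv]
  exact (ha.hasFDerivAt.sub_const (φ θ)).sub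
    ((innerSL ℝ (gradient φ θ)).hasFDerivAt.sub_const (inner ℝ (gradient φ θ) θ))

theorem dphi_le_of_isMinOn (hφ : ConvexOn ℝ univ φ) {s : Set (EuclideanSpace ℝ (Fin p))}
    (hs : Convex ℝ s) {a θ x : EuclideanSpace ℝ (Fin p)} (hda : DifferentiableAt ℝ φ a)
    (hdθ : DifferentiableAt ℝ φ θ) (ha : a ∈ s) (hmin : IsMinOn (fun y => dphi φ y θ) s a) (hx : x ∈ s) :
    dphi φ x a ≤ dphi φ x θ := by
  have first_order : 0 ≤ inner ℝ (gradient φ a - gradient φ θ) (x - a) :=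
    hmin.localize.hasFDerivWithinAt_nonneg (hasFDerivAt_dphi_left hda θ).hasFDerivWithinAt
      (sub_mem_posTangentConeAt_of_segment_subset (hs.segment_subset ha hx))
  rw [← dphi_add_dphi_add_inner x a θ]
  linarith [dphi_nonneg hφ hdθ a]

theorem continuous_fTheta {k : ℕ} (hφ : ConvexOn ℝ univ φ) (hd : Differentiable ℝ φ)
    {Ψ : (Fin k → ℝ) → ℝ} (hΨ : ContinuousOn Ψ {u | ∀ j, 0 ≤ u j})
    (Θ : Fin k → EuclideanSpace ℝ (Fin p)) : Continuous (fTheta φ Ψ Θ) :=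
  hΨ.comp_continuous (continuous_pi fun j => continuous_dphi_left hd.continuous (Θ j))
    fun x j => dphi_nonneg hφ (hd (Θ j)) x

end Bregman

theorem exists_cube_centroids_le_general
    {p k : ℕ} {M : ℝ}
    (φ : EuclideanSpace ℝ (Fin p) → ℝ)
    (hφconv : ConvexOn ℝ Set.univ φ) (hφdiff : Differentiable ℝ φ)
    (Ψ : (Fin k → ℝ) → ℝ)
    (hΨmono : ∀ u v : Fin k → ℝ, (∀ j, 0 ≤ u j) → (∀ j, u j ≤ v j) → Ψ u ≤ Ψ v)
    {τ : ℝ} (hτ : 0 < τ)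
    (hΨlip : ∀ u v : Fin k → ℝ, (∀ j, 0 ≤ u j) → (∀ j, 0 ≤ v j) →
      |Ψ u - Ψ v| ≤ τ * ∑ j, |u j - v j|)
    (Q : Measure (EuclideanSpace ℝ (Fin p))) [IsProbabilityMeasure Q]
    (hQ : Q (cube p M) = 1) :
    ∀ Θ : Fin k → EuclideanSpace ℝ (Fin p),
      ∃ Θ' : Fin k → EuclideanSpace ℝ (Fin p),
        (∀ j, Θ' j ∈ cube p M) ∧
        (∀ j, ∀ x ∈ cube p M, dphi φ (Θ' j) (Θ j) ≤ dphi φ x (Θ j)) ∧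
        Integrable (fTheta φ Ψ Θ') Q ∧ Integrable (fTheta φ Ψ Θ) Q ∧
        ∫ x, fTheta φ Ψ Θ' x ∂Q ≤ ∫ x, fTheta φ Ψ Θ x ∂Q := by
  intro Θ
  have hcube : ∀ᵐ x ∂Q, x ∈ cube p M :=
    (mem_ae_iff_prob_eq_one (isCompact_cube p M).isClosed.measurableSet).2 hQ
  have hΨcont : ContinuousOn Ψ {u | ∀ j, 0 ≤ u j} :=
    (LipschitzOnWith.of_abs_sub_le_mul_sum_abs hτ.le fun u hu v hv =>
      hΨlip u v hu hv).continuousOn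
  have hint (T : Fin k → EuclideanSpace ℝ (Fin p)) : Integrable (fTheta φ Ψ T) Q :=
    .of_continuousOn_of_ae_mem (isCompact_cube p M)
      (continuous_fTheta hφconv hφdiff hΨcont T).continuousOn hcube
  have hne : (cube p M).Nonempty := nonempty_of_measure_ne_zero (μ := Q) (by simp [hQ])
  choose Θ' hΘ'mem hΘ'min using fun j => (isCompact_cube p M).exists_isMinOn hne
    (continuous_dphi_left hφdiff.continuous (Θ j)).continuousOn
  refine ⟨Θ', hΘ'mem, fun j x hx => hΘ'min j hx, hint Θ', hint Θ,
    integral_mono_ae (hint Θ') (hint Θ) ?_⟩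
  filter_upwards [hcube] with x hx
  exact hΨmono _ _ (fun j => dphi_nonneg hφconv (hφdiff (Θ' j)) x)
    fun j => dphi_le_of_isMinOn hφconv (convex_cube p M) (hφdiff _) (hφdiff _) (hΘ'mem j)
      (hΘ'min j) hx

/-- Restricting centroids to the cube can only decrease the population risk:
one may take each `θ'_j` to be a Bregman projection of `θ_j` onto `[-M,M]^p`. -/
theorem exists_cube_centroids_le
    {p k : ℕ} (hp : 0 < p) (hk : 0 < k) {M : ℝ} (hM : 0 < M)
    (φ : EuclideanSpace ℝ (Fin p) → ℝ)
    (hφconv : ConvexOn ℝ Set.univ φ) (hφdiff : Differentiable ℝ φ)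
    (hφzero : φ 0 = 0) (hgradzero : gradient φ 0 = 0)
    {H : ℝ} (hH : 0 ≤ H)
    (hgradlip : ∀ x ∈ cube p M, ∀ y ∈ cube p M,
      ‖gradient φ x - gradient φ y‖ ≤ H * ‖x - y‖)
    (Ψ : (Fin k → ℝ) → ℝ)
    (hΨnonneg : ∀ u : Fin k → ℝ, (∀ j, 0 ≤ u j) → 0 ≤ Ψ u)
    (hΨmono : ∀ u v : Fin k → ℝ, (∀ j, 0 ≤ u j) → (∀ j, u j ≤ v j) → Ψ u ≤ Ψ v)
    (hΨzero : Ψ 0 = 0)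
    {τ : ℝ} (hτ : 0 < τ)
    (hΨlip : ∀ u v : Fin k → ℝ, (∀ j, 0 ≤ u j) → (∀ j, 0 ≤ v j) →
      |Ψ u - Ψ v| ≤ τ * ∑ j, |u j - v j|)
    (Q : Measure (EuclideanSpace ℝ (Fin p))) [IsProbabilityMeasure Q]
    (hQ : Q (cube p M) = 1) :
    ∀ Θ : Fin k → EuclideanSpace ℝ (Fin p),
      ∃ Θ' : Fin k → EuclideanSpace ℝ (Fin p),
        (∀ j, Θ' j ∈ cube p M) ∧
        (∀ j, ∀ x ∈ cube p M, dphi φ (Θ' j) (Θ j) ≤ dphi φ x (Θ j)) ∧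
        Integrable (fTheta φ Ψ Θ') Q ∧ Integrable (fTheta φ Ψ Θ) Q ∧
        ∫ x, fTheta φ Ψ Θ' x ∂Q ≤ ∫ x, fTheta φ Ψ Θ x ∂Q :=
  exists_cube_centroids_le_general φ hφconv hφdiff Ψ hΨmono hτ hΨlip Q hQ
end
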